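/- arXiv:2003.12732 — 2 statements merged into one kernel-verified Lean document; each statement's English description precedes it below -/
import Mathlib

section
/- Let W be a bounded linear operator from H_{d,n} to H_{d,m} with finite propagation. Then the map ℝ^d ∋ k ↦ v(k) W v(−k) extends to a holomorphic map defined on all of ℂ^d with values in the Banach space of bounded operators from H_{d,n} to H_{d,m}. In particular, every morphism with finite propagation is analytic (hence also smooth and uniform). -/
open MeasureTheory Complex Filter

noncomputable section

set_option synthInstance.maxHeartbeats 1000000
set_option maxHeartbeats 1000000

/-- The Hilbert space `H_{d,n} = ℓ²(ℤ^d; ℂ^n)`. -/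
abbrev HilZ (d n : ℕ) : Type := lp (fun _ : Fin d → ℤ => EuclideanSpace ℂ (Fin n)) 2

/-- `v` is the family of phase (wavenumber) unitaries: `(v k ξ)_x = e^{i x·k} ξ_x`. -/
def IsPhaseFamily (d n : ℕ) (v : (Fin d → ℝ) → (HilZ d n →L[ℂ] HilZ d n)) : Prop :=
  ∀ (k : Fin d → ℝ) (ξ : HilZ d n) (x : Fin d → ℤ),
    v k ξ x = Complex.exp (Complex.I * ((∑ i, (x i : ℝ) * k i : ℝ) : ℂ)) • ξ x

namespace FPaux

variable {d n m : ℕ}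

lemma single_add (x : Fin d → ℤ) (u v : EuclideanSpace ℂ (Fin n)) :
    lp.single (E := fun _ : Fin d → ℤ => EuclideanSpace ℂ (Fin n)) 2 x (u + v)
      = lp.single 2 x u + lp.single 2 x v := by
  apply lp.ext
  funext j
  by_cases h : j = x
  · subst h
    simp [lp.coeFn_add, lp.single_apply_self]
  · simp [lp.coeFn_add, lp.single_apply_ne _ x _ h]

/-- The matrix entries of `W`, as linear maps. -/
def entryAux (W : HilZ d n →L[ℂ] HilZ d m) (x y : Fin d → ℤ) :
    EuclideanSpace ℂ (Fin n) →ₗ[ℂ] EuclideanSpace ℂ (Fin m) where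
  toFun := fun u => W (lp.single 2 x u) y
  map_add' := by
    intro u v
    dsimp only
    rw [single_add, map_add, lp.coeFn_add, Pi.add_apply]
  map_smul' := by
    intro c u
    dsimp only
    rw [lp.single_smul, _root_.map_smul, lp.coeFn_smul, Pi.smul_apply, RingHom.id_apply]

lemma entryAux_norm_le (W : HilZ d n →L[ℂ] HilZ d m) (x y : Fin d → ℤ)
    (u : EuclideanSpace ℂ (Fin n)) : ‖entryAux W x y u‖ ≤ ‖W‖ * ‖u‖ := by
  show ‖W (lp.single 2 x u) y‖ ≤ ‖W‖ * ‖u‖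
  have h1 : ‖W (lp.single 2 x u) y‖ ≤ ‖W (lp.single 2 x u)‖ :=
    lp.norm_apply_le_norm (by norm_num) _ y
  have h2 := W.le_opNorm (lp.single 2 x u)
  have h3 : ‖lp.single (E := fun _ : Fin d → ℤ => EuclideanSpace ℂ (Fin n)) 2 x u‖ = ‖u‖ :=
    lp.norm_single (E := fun _ : Fin d → ℤ => EuclideanSpace ℂ (Fin n)) (by norm_num) x u
  rw [h3] at h2
  exact h1.trans h2

/-- The matrix entries of `W`, as continuous linear maps. -/
def entry (W : HilZ d n →L[ℂ] HilZ d m) (x y : Fin d → ℤ) :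
    EuclideanSpace ℂ (Fin n) →L[ℂ] EuclideanSpace ℂ (Fin m) :=
  LinearMap.mkContinuous (entryAux W x y) ‖W‖ (entryAux_norm_le W x y)

lemma entry_apply (W : HilZ d n →L[ℂ] HilZ d m) (x y : Fin d → ℤ)
    (u : EuclideanSpace ℂ (Fin n)) : entry W x y u = W (lp.single 2 x u) y := rfl

lemma entry_apply_norm_le (W : HilZ d n →L[ℂ] HilZ d m) (x y : Fin d → ℤ)
    (u : EuclideanSpace ℂ (Fin n)) : ‖entry W x y u‖ ≤ ‖W‖ * ‖u‖ :=
  entryAux_norm_le W x y u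

lemma sq_summable (ξ : HilZ d n) (a : Fin d → ℤ) :
    Summable (fun y : Fin d → ℤ => ‖ξ (y - a)‖ ^ (2 : ENNReal).toReal) := by
  have h0 : Summable (fun y : Fin d → ℤ => ‖ξ y‖ ^ (2 : ENNReal).toReal) :=
    (lp.memℓp ξ).summable (by norm_num)
  exact (Equiv.subRight a).summable_iff.mpr h0

lemma bound_summable (W : HilZ d n →L[ℂ] HilZ d m) (a : Fin d → ℤ) (ξ : HilZ d n) :
    Summable (fun y : Fin d → ℤ => (‖W‖ * ‖ξ (y - a)‖) ^ (2 : ENNReal).toReal) := by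
  have := (sq_summable ξ a).mul_left (‖W‖ ^ (2 : ENNReal).toReal)
  refine this.congr fun y => ?_
  rw [Real.mul_rpow (norm_nonneg _) (norm_nonneg _)]

lemma bandFun_memℓp (W : HilZ d n →L[ℂ] HilZ d m) (a : Fin d → ℤ) (ξ : HilZ d n) :
    Memℓp (fun y : Fin d → ℤ => entry W (y - a) y (ξ (y - a))) 2 := by
  apply memℓp_gen
  refine (bound_summable W a ξ).of_nonneg_of_le
    (fun y => Real.rpow_nonneg (norm_nonneg _) _) (fun y => ?_)
  exact Real.rpow_le_rpow (norm_nonneg _) (entry_apply_norm_le W _ y _) (by norm_num)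

/-- The `a`-th band (off-diagonal) part of `W`, as a linear map. -/
def bandL (W : HilZ d n →L[ℂ] HilZ d m) (a : Fin d → ℤ) : HilZ d n →ₗ[ℂ] HilZ d m where
  toFun := fun ξ => ⟨fun y => entry W (y - a) y (ξ (y - a)), bandFun_memℓp W a ξ⟩
  map_add' := by
    intro ξ η
    apply lp.ext
    funext y
    simp only [lp.coeFn_add, Pi.add_apply, map_add]
  map_smul' := by
    intro c ξ
    apply lp.ext
    funext y
    simp only [lp.coeFn_smul, Pi.smul_apply, _root_.map_smul, RingHom.id_apply]

lemma bandL_apply (W : HilZ d n →L[ℂ] HilZ d m) (a : Fin d → ℤ) (ξ : HilZ d n)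
    (y : Fin d → ℤ) : (bandL W a ξ) y = entry W (y - a) y (ξ (y - a)) := rfl

lemma bandL_norm_le (W : HilZ d n →L[ℂ] HilZ d m) (a : Fin d → ℤ) (ξ : HilZ d n) :
    ‖bandL W a ξ‖ ≤ ‖W‖ * ‖ξ‖ := by
  set t : ℝ := (2 : ENNReal).toReal with ht
  have ht0 : 0 < t := by norm_num [ht]
  have key : ‖bandL W a ξ‖ ^ t ≤ (‖W‖ * ‖ξ‖) ^ t := by
    rw [lp.norm_rpow_eq_tsum ht0]
    have hle : ∑' y : Fin d → ℤ, ‖(bandL W a ξ) y‖ ^ t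
        ≤ ∑' y : Fin d → ℤ, (‖W‖ * ‖ξ (y - a)‖) ^ t := by
      refine Summable.tsum_le_tsum (fun y => ?_) ((lp.memℓp _).summable ht0) (bound_summable W a ξ)
      exact Real.rpow_le_rpow (norm_nonneg _) (entry_apply_norm_le W _ y _) ht0.le
    refine hle.trans (le_of_eq ?_)
    calc ∑' y : Fin d → ℤ, (‖W‖ * ‖ξ (y - a)‖) ^ t
        = ∑' y : Fin d → ℤ, ‖W‖ ^ t * ‖ξ (y - a)‖ ^ t := by
          congr 1; funext y; rw [Real.mul_rpow (norm_nonneg _) (norm_nonneg _)]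
      _ = ‖W‖ ^ t * ∑' y : Fin d → ℤ, ‖ξ (y - a)‖ ^ t := tsum_mul_left
      _ = ‖W‖ ^ t * ∑' y : Fin d → ℤ, ‖ξ y‖ ^ t := by
          congr 1
          exact (Equiv.subRight a).tsum_eq (fun y => ‖ξ y‖ ^ t)
      _ = ‖W‖ ^ t * ‖ξ‖ ^ t := by rw [lp.norm_rpow_eq_tsum ht0]
      _ = (‖W‖ * ‖ξ‖) ^ t := (Real.mul_rpow (norm_nonneg _) (norm_nonneg _)).symm
  exact (Real.rpow_le_rpow_iff (norm_nonneg _)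
    (mul_nonneg (norm_nonneg _) (norm_nonneg _)) ht0).mp key

/-- The `a`-th band of `W`, as a bounded operator. -/
def band (W : HilZ d n →L[ℂ] HilZ d m) (a : Fin d → ℤ) : HilZ d n →L[ℂ] HilZ d m :=
  LinearMap.mkContinuous (bandL W a) ‖W‖ (bandL_norm_le W a)

lemma band_apply (W : HilZ d n →L[ℂ] HilZ d m) (a : Fin d → ℤ) (ξ : HilZ d n)
    (y : Fin d → ℤ) : (band W a ξ) y = entry W (y - a) y (ξ (y - a)) := rfl

/-- Extensionality for bounded operators on `ℓ²(ℤ^d; ℂ^n)` via the standard "basis". -/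
lemma clm_ext_single (A B : HilZ d n →L[ℂ] HilZ d m)
    (h : ∀ (x : Fin d → ℤ) (u : EuclideanSpace ℂ (Fin n)),
      A (lp.single 2 x u) = B (lp.single 2 x u)) : A = B := by
  refine ContinuousLinearMap.ext fun ξ => ?_
  have h1 : HasSum (fun x : Fin d → ℤ => lp.single 2 x (ξ x)) ξ :=
    lp.hasSum_single (by norm_num : (2 : ENNReal) ≠ ⊤) ξ
  have hA : HasSum (fun x : Fin d → ℤ => A (lp.single 2 x (ξ x))) (A ξ) := h1.mapL A
  have hB : HasSum (fun x : Fin d → ℤ => B (lp.single 2 x (ξ x))) (B ξ) := h1.mapL B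
  refine hA.unique ?_
  simpa only [h] using hB

lemma single_coord_zero (f : HilZ d m) (y : Fin d → ℤ)
    (h : ∀ w : EuclideanSpace ℂ (Fin m), (inner ℂ f (lp.single 2 y w) : ℂ) = 0) :
    f y = 0 := by
  have := h (f y)
  rw [lp.inner_single_right] at this
  exact inner_self_eq_zero.mp this

lemma phase_single {v : (Fin d → ℝ) → (HilZ d n →L[ℂ] HilZ d n)}
    (hv : IsPhaseFamily d n v) (k : Fin d → ℝ) (x : Fin d → ℤ)
    (u : EuclideanSpace ℂ (Fin n)) :
    v k (lp.single 2 x u)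
      = Complex.exp (Complex.I * ((∑ i, (x i : ℝ) * k i : ℝ) : ℂ)) • lp.single 2 x u := by
  apply lp.ext
  funext z
  rw [lp.coeFn_smul, Pi.smul_apply, hv k _ z]
  by_cases h : z = x
  · subst h; rfl
  · rw [lp.single_apply_ne _ x _ h, smul_zero, smul_zero]

end FPaux

/-- a finite-propagation bounded operator `W : H_{d,n} → H_{d,m}` is analytic:
the map `k ↦ v(k) W v(-k)` extends to a holomorphic map on all of `ℂ^d`; in particular it is
also `C^∞` and continuous in operator norm. -/
theorem finite_propagation_implies_analytic
    (d n m : ℕ)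
    (v₁ : (Fin d → ℝ) → (HilZ d n →L[ℂ] HilZ d n)) (hv₁ : IsPhaseFamily d n v₁)
    (v₂ : (Fin d → ℝ) → (HilZ d m →L[ℂ] HilZ d m)) (hv₂ : IsPhaseFamily d m v₂)
    (W : HilZ d n →L[ℂ] HilZ d m)
    (hW : ∃ R : ℝ, 0 < R ∧ ∀ (x y : Fin d → ℤ),
      R < ‖(fun i => ((x i - y i : ℤ) : ℝ))‖ →
      ∀ (u : EuclideanSpace ℂ (Fin n)) (w : EuclideanSpace ℂ (Fin m)),
        (inner ℂ (W (lp.single 2 x u)) (lp.single 2 y w) : ℂ) = 0) :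
    (∃ F : (Fin d → ℂ) → (HilZ d n →L[ℂ] HilZ d m),
        Differentiable ℂ F ∧
        ∀ k : Fin d → ℝ, F (fun i => (k i : ℂ)) = v₂ k ∘L W ∘L v₁ (-k)) ∧
    ContDiff ℝ (⊤ : ℕ∞) (fun k : Fin d → ℝ => v₂ k ∘L W ∘L v₁ (-k)) ∧
    Continuous (fun k : Fin d → ℝ => v₂ k ∘L W ∘L v₁ (-k)) := by
  classical
  obtain ⟨R, hR0, hR⟩ := hW
  -- the finite set of admissible bands
  set N : ℤ := ⌈R⌉ with hN
  set S : Finset (Fin d → ℤ) := Fintype.piFinset (fun _ => Finset.Icc (-N) N) with hS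
  -- coordinates of W (single x u) vanish outside the bands
  have hvanish : ∀ (x y : Fin d → ℤ), y - x ∉ S →
      ∀ u : EuclideanSpace ℂ (Fin n), (W (lp.single 2 x u)) y = 0 := by
    intro x y hy u
    apply FPaux.single_coord_zero
    intro w
    apply hR x y _ u w
    -- produce the norm bound
    rw [Fintype.mem_piFinset] at hy
    push_neg at hy
    obtain ⟨i, hi⟩ := hy
    rw [Finset.mem_Icc] at hi
    have hzi : (y - x) i = y i - x i := rfl
    rw [hzi] at hi
    push_neg at hi
    have hNi : N < |y i - x i| := by
      rcases le_or_gt (-N) (y i - x i) with h1 | h1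
      · exact lt_of_lt_of_le (hi h1) (le_abs_self _)
      · exact lt_of_lt_of_le (by linarith) (neg_le_abs _)
    have hcast : (N : ℝ) < |((y i - x i : ℤ) : ℝ)| := by
      rw [← Int.cast_abs]
      exact_mod_cast hNi
    have hRN : R ≤ (N : ℝ) := Int.le_ceil R
    have hcoord : |((x i - y i : ℤ) : ℝ)| = |((y i - x i : ℤ) : ℝ)| := by
      push_cast
      rw [abs_sub_comm]
    have hle : |((x i - y i : ℤ) : ℝ)| ≤ ‖(fun i => ((x i - y i : ℤ) : ℝ))‖ := by
      have := norm_le_pi_norm (fun i => ((x i - y i : ℤ) : ℝ)) i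
      simpa [Real.norm_eq_abs] using this
    calc R ≤ (N : ℝ) := hRN
      _ < |((y i - x i : ℤ) : ℝ)| := hcast
      _ = |((x i - y i : ℤ) : ℝ)| := hcoord.symm
      _ ≤ _ := hle
  -- the candidate holomorphic family
  set F : (Fin d → ℂ) → (HilZ d n →L[ℂ] HilZ d m) := fun z =>
    ∑ a ∈ S, Complex.exp (Complex.I * ∑ i, (a i : ℂ) * z i) • FPaux.band W a with hF
  -- the key identity on real points
  have key : ∀ k : Fin d → ℝ, F (fun i => (k i : ℂ)) = v₂ k ∘L W ∘L v₁ (-k) := by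
    intro k
    apply FPaux.clm_ext_single
    intro x u
    apply lp.ext
    funext y
    -- right side coordinate
    have hv1s : v₁ (-k) (lp.single 2 x u)
        = Complex.exp (Complex.I * ((∑ i, (x i : ℝ) * (-k) i : ℝ) : ℂ)) • lp.single 2 x u :=
      FPaux.phase_single hv₁ (-k) x u
    have hrhs : ((v₂ k ∘L W ∘L v₁ (-k)) (lp.single 2 x u)) y
        = (Complex.exp (Complex.I * ((∑ i, (y i : ℝ) * k i : ℝ) : ℂ))
            * Complex.exp (Complex.I * ((∑ i, (x i : ℝ) * (-k) i : ℝ) : ℂ)))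
          • (W (lp.single 2 x u)) y := by
      rw [ContinuousLinearMap.comp_apply, ContinuousLinearMap.comp_apply, hv1s,
        _root_.map_smul, _root_.map_smul, lp.coeFn_smul, Pi.smul_apply, hv₂ k _ y,
        smul_smul, mul_comm]
    -- left side coordinate
    have hlhs : ((F (fun i => (k i : ℂ))) (lp.single 2 x u)) y
        = ∑ a ∈ S, Complex.exp (Complex.I * ∑ i, (a i : ℂ) * (k i : ℂ))
            • ((FPaux.band W a (lp.single 2 x u)) y) := by
      rw [hF]
      rw [ContinuousLinearMap.sum_apply]
      rw [lp.coeFn_sum]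
      rw [Finset.sum_apply]
      refine Finset.sum_congr rfl fun a _ => ?_
      rw [ContinuousLinearMap.smul_apply, lp.coeFn_smul, Pi.smul_apply]
    rw [hlhs, hrhs]
    -- compute band coordinates on singles
    have hband : ∀ a : Fin d → ℤ, (FPaux.band W a (lp.single 2 x u)) y
        = if a = y - x then (W (lp.single 2 x u)) y else 0 := by
      intro a
      rw [FPaux.band_apply]
      by_cases h : a = y - x
      · subst h
        have : y - (y - x) = x := by abel
        rw [this, if_pos rfl, lp.single_apply_self, FPaux.entry_apply]
      · have hne : y - a ≠ x := by
          intro hc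
          apply h
          rw [← hc]; abel
        rw [lp.single_apply_ne _ x _ hne, if_neg h, map_zero]
    simp only [hband, smul_ite, smul_zero]
    rw [Finset.sum_ite_eq' S (y - x)]
    by_cases hmem : y - x ∈ S
    · rw [if_pos hmem]
      have hsum : (∑ i, ((y i : ℝ) * k i)) + (∑ i, ((x i : ℝ) * (-k) i))
          = ∑ i, (((y - x) i : ℤ) : ℝ) * k i := by
        rw [← Finset.sum_add_distrib]
        refine Finset.sum_congr rfl fun i _ => ?_
        simp only [Pi.sub_apply, Pi.neg_apply]
        push_cast
        ring
      have hscal : Complex.exp (Complex.I * ((∑ i, (y i : ℝ) * k i : ℝ) : ℂ))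
          * Complex.exp (Complex.I * ((∑ i, (x i : ℝ) * (-k) i : ℝ) : ℂ))
          = Complex.exp (Complex.I * ∑ i, (((y - x) i : ℤ) : ℂ) * ((k i : ℝ) : ℂ)) := by
        rw [← Complex.exp_add, ← mul_add]
        congr 1
        rw [← Complex.ofReal_add, hsum]
        push_cast
        rfl
      rw [← hscal]
    · rw [if_neg hmem, hvanish x y hmem u, smul_zero]
  refine ⟨⟨F, ?_, key⟩, ?_, ?_⟩
  · -- differentiability
    rw [hF]
    refine Differentiable.fun_sum fun a _ => ?_
    refine Differentiable.smul_const ?_ _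
    refine Differentiable.cexp ?_
    refine (differentiable_const Complex.I).mul ?_
    refine Differentiable.fun_sum fun i _ => ?_
    exact (differentiable_const _).mul (differentiable_apply i)
  · -- smoothness
    have hfun : (fun k : Fin d → ℝ => v₂ k ∘L W ∘L v₁ (-k))
        = fun k => F (fun i => (k i : ℂ)) := by
      funext k; exact (key k).symm
    rw [hfun, hF]
    refine ContDiff.sum fun a _ => ?_
    have hs : ContDiff ℝ (⊤ : ℕ∞) (fun k : Fin d → ℝ =>
        Complex.exp (Complex.I * ∑ i, (a i : ℂ) * ((k i : ℝ) : ℂ))) := by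
      refine ContDiff.cexp ?_
      refine ContDiff.mul contDiff_const ?_
      refine ContDiff.sum fun i _ => ?_
      refine ContDiff.mul contDiff_const ?_
      exact Complex.ofRealCLM.contDiff.comp (contDiff_apply ℝ ℝ i)
    have hlin : ContDiff ℝ (⊤ : ℕ∞) (ContinuousLinearMap.toSpanSingleton ℂ (FPaux.band W a)) :=
      ((ContinuousLinearMap.toSpanSingleton ℂ (FPaux.band W a)).contDiff).restrict_scalars ℝ
    have := hlin.comp hs
    simpa [Function.comp_def, ContinuousLinearMap.toSpanSingleton_apply] using this
  · -- continuity
    have hfun : (fun k : Fin d → ℝ => v₂ k ∘L W ∘L v₁ (-k))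
        = fun k => F (fun i => (k i : ℂ)) := by
      funext k; exact (key k).symm
    rw [hfun, hF]
    apply continuous_finset_sum
    intro a _
    refine Continuous.fun_smul ?_ continuous_const
    refine Continuous.cexp ?_
    refine continuous_const.mul ?_
    refine continuous_finset_sum _ fun i _ => ?_
    exact continuous_const.mul (Complex.continuous_ofReal.comp (continuous_apply i))

end
end

section
/- Let U be a smooth quantum walk on H_{d,n} (a unitary U such that k ↦ v(k) U v(−k) is C^∞ from ℝ^d to the bounded operators) and let ξ ∈ H_{d,n} be a smooth vector, i.e., k ↦ v(k)ξ is C^∞ from ℝ^d to H_{d,n}. Then for every t ∈ ℕ and every polynomial p : ℝ^d → ℝ one has Σ_{x∈ℤ^d} |p(x)| ‖(U^t ξ)_x‖² < ∞; that is, every real-valued polynomial is integrable with respect to the position distribution μ_{U^t ξ} = Σ_{x∈ℤ^d} ‖(U^t ξ)_x‖² δ_x. -/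
open MeasureTheory Complex Filter

noncomputable section

set_option synthInstance.maxHeartbeats 1000000
set_option maxHeartbeats 1000000

-- coordinate evaluation CLM
def coordCLM {d n : ℕ} (x : Fin d → ℤ) : HilZ d n →L[ℝ] EuclideanSpace ℂ (Fin n) :=
  LinearMap.mkContinuous
    { toFun := fun f => f x
      map_add' := fun f g => by simp
      map_smul' := fun c f => by simp [lp.coeFn_smul] }
    1 (fun f => by rw [one_mul]; exact lp.norm_apply_le_norm (by norm_num) f x)

@[simp] lemma coordCLM_apply {d n : ℕ} (x : Fin d → ℤ) (f : HilZ d n) :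
    coordCLM x f = f x := rfl

-- CLM commutes with iteratedDeriv
lemma clm_iteratedDeriv {F G : Type*} [NormedAddCommGroup F] [NormedSpace ℝ F]
    [NormedAddCommGroup G] [NormedSpace ℝ G] (g : F →L[ℝ] G) {f : ℝ → F}
    (hf : ContDiff ℝ (⊤ : ℕ∞) f) (m : ℕ) (x : ℝ) :
    iteratedDeriv m (fun s => g (f s)) x = g (iteratedDeriv m f x) := by
  have h := g.iteratedFDeriv_comp_left (i := m) (hf.contDiffAt (x := x)) (by exact_mod_cast le_top)
  rw [iteratedDeriv_eq_iteratedFDeriv, iteratedDeriv_eq_iteratedFDeriv]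
  have : (fun s => g (f s)) = g ∘ f := rfl
  rw [this, h]
  rfl

-- iterated derivative of s ↦ exp(a s) • w
lemma iteratedDeriv_exp_smul {n : ℕ} (a : ℂ) (m : ℕ) (w : EuclideanSpace ℂ (Fin n)) :
    iteratedDeriv m (fun s : ℝ => Complex.exp (a * s) • w) 0 = a ^ m • w := by
  induction m generalizing w with
  | zero => simp
  | succ m ih =>
    rw [iteratedDeriv_succ']
    have hderiv : (deriv fun s : ℝ => Complex.exp (a * s) • w)
        = fun s : ℝ => Complex.exp (a * s) • (a • w) := by
      funext s
      have h0 : HasDerivAt (fun s : ℝ => a * (s : ℂ)) a s := by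
        simpa using (Complex.ofRealCLM.hasDerivAt (x := s)).const_mul a
      have h1 : HasDerivAt (fun s : ℝ => Complex.exp (a * (s : ℂ)))
          (Complex.exp (a * s) * a) s := h0.cexp
      have h2 := h1.smul_const w
      rw [h2.deriv]
      rw [smul_smul, mul_comm, ← smul_smul]
    rw [hderiv, ih (a • w), smul_smul, ← pow_succ]

lemma summable_coord_pow {d n : ℕ} (η : HilZ d n)
    (F : (Fin d → ℝ) → HilZ d n) (hF : ContDiff ℝ (⊤ : ℕ∞) F)
    (hFeq : ∀ (k : Fin d → ℝ) (x : Fin d → ℤ), F k x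
      = Complex.exp (Complex.I * ((∑ i, (x i : ℝ) * k i : ℝ) : ℂ)) • η x)
    (i : Fin d) (m : ℕ) :
    Summable (fun x : Fin d → ℤ => (|(x i : ℝ)| ^ m * ‖η x‖) ^ 2) := by
  set e : Fin d → ℝ := Pi.single i 1 with he
  have hline : ContDiff ℝ (⊤ : ℕ∞) (fun s : ℝ => s • e) := contDiff_id.smul contDiff_const
  have hg : ContDiff ℝ (⊤ : ℕ∞) (fun s : ℝ => F (s • e)) := hF.comp hline
  set D : HilZ d n := iteratedDeriv m (fun s : ℝ => F (s • e)) 0 with hD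
  have hDx : ∀ x : Fin d → ℤ, D x = (Complex.I * ((x i : ℝ) : ℂ)) ^ m • η x := by
    intro x
    have h1 : (fun s : ℝ => coordCLM x (F (s • e)))
        = fun s : ℝ => Complex.exp ((Complex.I * ((x i : ℝ) : ℂ)) * s) • η x := by
      funext s
      rw [coordCLM_apply, hFeq]
      congr 2
      have hs : (∑ j, (x j : ℝ) * (s • e) j) = (x i : ℝ) * s := by
        simp [he, Pi.single_apply, mul_ite, mul_comm]
      rw [hs]
      push_cast
      ring
    have h2 := clm_iteratedDeriv (coordCLM x) hg m 0
    rw [h1, iteratedDeriv_exp_smul] at h2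
    rw [← hD] at h2
    simpa using h2.symm
  have hsum : Summable (fun x : Fin d → ℤ => ‖D x‖ ^ (2 : ℕ)) := by
    have h := (lp.memℓp D).summable (p := 2) (by norm_num)
    refine h.congr fun x => ?_
    rw [ENNReal.toReal_ofNat, Real.rpow_two]
  refine hsum.congr fun x => ?_
  rw [hDx x, norm_smul, norm_pow, norm_mul, Complex.norm_I, Complex.norm_real,
    Real.norm_eq_abs, one_mul]
lemma prod_abs_pow_le {d : ℕ} (y : Fin d → ℝ) (a : Fin d →₀ ℕ) (S : ℕ)
    (hS : ∑ i, a i ≤ S) :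
    ∏ i, |y i| ^ a i ≤ 1 + ∑ i, |y i| ^ S := by
  have h2 : 0 ≤ ∑ i, |y i| ^ S := Finset.sum_nonneg fun i _ => by positivity
  by_cases hall : ∀ i, |y i| ≤ 1
  · have h1 : ∏ i, |y i| ^ a i ≤ 1 :=
      Finset.prod_le_one (fun i _ => by positivity)
        (fun i _ => pow_le_one₀ (abs_nonneg _) (hall i))
    linarith
  · push_neg at hall
    obtain ⟨j, hj⟩ := hall
    have hne : (Finset.univ : Finset (Fin d)).Nonempty := ⟨j, Finset.mem_univ j⟩
    have hMdef : ∃ M : ℝ, M = Finset.univ.sup' hne (fun i => |y i|) := ⟨_, rfl⟩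
    obtain ⟨M, hM⟩ := hMdef
    have hM1 : 1 ≤ M :=
      hM ▸ (Finset.le_sup'_iff hne).2 ⟨j, Finset.mem_univ j, hj.le⟩
    have hle : ∀ i, |y i| ≤ M := fun i => hM ▸ (Finset.le_sup'_iff hne).2 ⟨i, Finset.mem_univ i, le_refl _⟩
    have h1 : ∏ i, |y i| ^ a i ≤ ∏ i, M ^ a i :=
      Finset.prod_le_prod (fun i _ => by positivity)
        (fun i _ => pow_le_pow_left₀ (abs_nonneg _) (hle i) _)
    have h3 : ∏ i, M ^ a i = M ^ (∑ i, a i) := by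
      rw [Finset.prod_pow_eq_pow_sum]
    have h4 : M ^ (∑ i, a i) ≤ M ^ S := pow_le_pow_right₀ hM1 hS
    obtain ⟨j', -, hj'⟩ := Finset.exists_mem_eq_sup' hne (fun i => |y i|)
    have h5 : M ^ S ≤ ∑ i, |y i| ^ S := by
      rw [hM, hj']
      exact Finset.single_le_sum (f := fun i => |y i| ^ S)
        (fun i _ => by positivity) (Finset.mem_univ j')
    linarith
/-- if `U` is a smooth quantum walk on `H_{d,n}` and `ξ` is a smooth vector,
then for every `t ∈ ℕ` every real polynomial is integrable with respect to the position
distribution `μ_{U^t ξ} = Σ_x ‖(U^t ξ)_x‖² δ_x`. -/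
theorem polynomial_integrable_of_smooth
    (d n : ℕ)
    (v : (Fin d → ℝ) → (HilZ d n →L[ℂ] HilZ d n)) (hv : IsPhaseFamily d n v)
    (U : HilZ d n →L[ℂ] HilZ d n)
    (hUunitary : U ∈ unitary (HilZ d n →L[ℂ] HilZ d n))
    (hUsmooth : ContDiff ℝ (⊤ : ℕ∞) (fun k : Fin d → ℝ => v k ∘L U ∘L v (-k)))
    (ξ : HilZ d n)
    (hξsmooth : ContDiff ℝ (⊤ : ℕ∞) (fun k : Fin d → ℝ => v k ξ)) :
    ∀ (t : ℕ) (p : MvPolynomial (Fin d) ℝ),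
      Summable (fun x : Fin d → ℤ =>
        |MvPolynomial.eval (fun i => (x i : ℝ)) p| * ‖((U ^ t) ξ) x‖ ^ 2) := by
  intro t p
  -- cancellation
  have hcan : ∀ (k : Fin d → ℝ) (ζ : HilZ d n), v (-k) (v k ζ) = ζ := by
    intro k ζ
    apply lp.ext
    funext x
    rw [hv, hv, smul_smul, ← Complex.exp_add]
    have h0 : Complex.I * ((∑ i, (x i : ℝ) * (-k) i : ℝ) : ℂ)
        + Complex.I * ((∑ i, (x i : ℝ) * k i : ℝ) : ℂ) = 0 := by
      have hneg : (∑ i, (x i : ℝ) * (-k) i) = -(∑ i, (x i : ℝ) * k i) := by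
        simp [mul_neg]
      rw [hneg]
      push_cast
      ring
    rw [h0, Complex.exp_zero, one_smul]
  -- conjugated walk powers
  have hWpow : ∀ (T : ℕ) (k : Fin d → ℝ),
      v k ((U ^ T) ξ) = ((v k ∘L U ∘L v (-k)) ^ T) (v k ξ) := by
    intro T k
    induction T with
    | zero => simp
    | succ t ih =>
      calc v k ((U ^ (t + 1)) ξ) = v k (U ((U ^ t) ξ)) := by
            rw [pow_succ']; rfl
        _ = (v k ∘L U ∘L v (-k)) (v k ((U ^ t) ξ)) := by
            simp only [ContinuousLinearMap.comp_apply, hcan]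
        _ = (v k ∘L U ∘L v (-k)) (((v k ∘L U ∘L v (-k)) ^ t) (v k ξ)) := by rw [ih]
        _ = ((v k ∘L U ∘L v (-k)) ^ (t + 1)) (v k ξ) := by
            rw [pow_succ']; rfl
  -- smoothness of powers
  have hWt : ∀ T : ℕ, ContDiff ℝ (⊤ : ℕ∞) (fun k : Fin d → ℝ => (v k ∘L U ∘L v (-k)) ^ T) := by
    intro T
    induction T with
    | zero => simp only [pow_zero]; exact contDiff_const
    | succ T ih => simp only [pow_succ]; exact ih.mul hUsmooth
  set η : HilZ d n := (U ^ t) ξ with hη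
  have hF : ContDiff ℝ (⊤ : ℕ∞) (fun k : Fin d → ℝ => v k η) := by
    have heq : (fun k : Fin d → ℝ => v k η)
        = fun k => ((ContinuousLinearMap.restrictScalarsL ℂ (HilZ d n) (HilZ d n) ℝ ℝ)
            ((v k ∘L U ∘L v (-k)) ^ t)) (v k ξ) := funext fun k => hWpow t k
    rw [heq]
    exact (((ContinuousLinearMap.restrictScalarsL ℂ (HilZ d n) (HilZ d n) ℝ ℝ).contDiff.comp
      (hWt t)).clm_apply hξsmooth)
  have hkey : ∀ (i : Fin d) (m : ℕ),
      Summable (fun x : Fin d → ℤ => (|(x i : ℝ)| ^ m * ‖η x‖) ^ 2) :=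
    summable_coord_pow η (fun k => v k η) hF (fun k x => hv k η x)
  have hsum0 : Summable (fun x : Fin d → ℤ => ‖η x‖ ^ 2) := by
    have h := (lp.memℓp η).summable (p := 2) (by norm_num)
    refine h.congr fun x => ?_
    rw [ENNReal.toReal_ofNat, Real.rpow_two]
  set m := p.totalDegree with hm
  set S := m * 2 with hS
  have hSi : ∀ i : Fin d,
      Summable (fun x : Fin d → ℤ => |(x i : ℝ)| ^ S * ‖η x‖ ^ 2) := by
    intro i
    refine (hkey i m).congr fun x => ?_
    rw [mul_pow, ← pow_mul]
  set C : ℝ := ∑ a ∈ p.support, |MvPolynomial.coeff a p| with hC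
  have hmaj : Summable (fun x : Fin d → ℤ =>
      C * (‖η x‖ ^ 2 + ∑ i, |(x i : ℝ)| ^ S * ‖η x‖ ^ 2)) :=
    (hsum0.add (summable_sum fun i _ => hSi i)).mul_left C
  refine Summable.of_nonneg_of_le (fun x => by positivity) (fun x => ?_) hmaj
  set y : Fin d → ℝ := fun i => ((x i : ℝ)) with hy
  have hb : |MvPolynomial.eval y p| ≤ C * (1 + ∑ i, |y i| ^ S) := by
    rw [MvPolynomial.eval_eq']
    calc |∑ a ∈ p.support, MvPolynomial.coeff a p * ∏ i, y i ^ a i|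
        ≤ ∑ a ∈ p.support, |MvPolynomial.coeff a p * ∏ i, y i ^ a i| :=
          Finset.abs_sum_le_sum_abs _ _
      _ = ∑ a ∈ p.support, |MvPolynomial.coeff a p| * ∏ i, |y i| ^ a i := by
          refine Finset.sum_congr rfl fun a _ => ?_
          rw [abs_mul, Finset.abs_prod]
          simp [_root_.abs_pow]
      _ ≤ ∑ a ∈ p.support, |MvPolynomial.coeff a p| * (1 + ∑ i, |y i| ^ S) := by
          refine Finset.sum_le_sum fun a ha => ?_
          refine mul_le_mul_of_nonneg_left ?_ (abs_nonneg _)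
          refine prod_abs_pow_le y a S ?_
          have h1 : (∑ i, a i) = ∑ i ∈ a.support, a i :=
            (Finset.sum_subset (Finset.subset_univ _)
              (fun i _ hi => Finsupp.notMem_support_iff.mp hi)).symm
          rw [h1]
          exact le_trans (MvPolynomial.le_totalDegree ha) (by omega)
      _ = C * (1 + ∑ i, |y i| ^ S) := by rw [hC, Finset.sum_mul]
  have hnn : (0 : ℝ) ≤ ‖η x‖ ^ 2 := by positivity
  calc |MvPolynomial.eval y p| * ‖η x‖ ^ 2
      ≤ (C * (1 + ∑ i, |y i| ^ S)) * ‖η x‖ ^ 2 :=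
        mul_le_mul_of_nonneg_right hb hnn
    _ = C * (‖η x‖ ^ 2 + ∑ i, |y i| ^ S * ‖η x‖ ^ 2) := by
        rw [← Finset.sum_mul]; ring

end
end
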